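/- Kirszbraun's lemma on intersections of balls: Let m, n, k be natural numbers, let x₁, …, x_k ∈ ℝᵐ and y₁, …, y_k ∈ ℝⁿ satisfy ‖y_i − y_j‖ ≤ ‖x_i − x_j‖ for all 1 ≤ i, j ≤ k, and let r₁, …, r_k be positive real numbers. If the closed balls B̄(x₁, r₁), …, B̄(x_k, r_k) have a common point in ℝᵐ, then the closed balls B̄(y₁, r₁), …, B̄(y_k, r_k) have a common point in ℝⁿ. -/

import Mathlib

/-!
Let `f z = maxᵢ (‖z - yᵢ‖² - rᵢ²)` (the largest power of `z` with respect to the spheres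
`S(yᵢ, rᵢ)`) and let `z₀` minimise `f` on the convex hull of the `yᵢ`. If `z₀` were not in the
convex hull of the active centres (those `yᵢ` attaining the maximum), moving `z₀` slightly towards
the nearest point of that hull would decrease every active term, contradicting minimality.
Hence `z₀ = ∑ wⱼ yⱼ` over active `j`, and the identity
`∑ⱼₗ wⱼ wₗ ‖uⱼ - uₗ‖² = 2 (∑ⱼ wⱼ ‖uⱼ - p‖² - ‖∑ⱼ wⱼ (uⱼ - p)‖²)`, applied to the `yⱼ` around `z₀`
and to the `xⱼ` around a common point `p` of the balls `B̄(xᵢ, rᵢ)`, gives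
`f z₀ + ∑ wⱼ rⱼ² ≤ ∑ wⱼ ‖xⱼ - p‖² ≤ ∑ wⱼ rⱼ²`, i.e. `f z₀ ≤ 0`.
-/

open Metric Finset Filter Set
open scoped RealInnerProductSpace Topology

variable {E F : Type*} [NormedAddCommGroup E] [NormedAddCommGroup F]

section maxPower

variable {ι : Type*} [Fintype ι] [Nonempty ι] (y : ι → F) (r : ι → ℝ)

noncomputable def maxPower (z : F) : ℝ :=
  univ.sup' univ_nonempty fun i => ‖z - y i‖ ^ 2 - r i ^ 2

def maxPowerActive (z : F) : Set ι :=
  {i | ‖z - y i‖ ^ 2 - r i ^ 2 = maxPower y r z}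

theorem continuous_maxPower : Continuous (maxPower y r) :=
  Continuous.finset_sup'_apply univ_nonempty fun i _ => by fun_prop

variable {y r}

theorem power_le_maxPower (z : F) (i : ι) : ‖z - y i‖ ^ 2 - r i ^ 2 ≤ maxPower y r z :=
  le_sup' (fun i => ‖z - y i‖ ^ 2 - r i ^ 2) (mem_univ i)

theorem maxPower_lt_iff {z : F} {c : ℝ} :
    maxPower y r z < c ↔ ∀ i, ‖z - y i‖ ^ 2 - r i ^ 2 < c := by
  simp [maxPower, sup'_lt_iff]

theorem maxPowerActive_nonempty (z : F) : (maxPowerActive y r z).Nonempty := by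
  obtain ⟨i, -, hi⟩ := exists_mem_eq_sup' univ_nonempty fun i => ‖z - y i‖ ^ 2 - r i ^ 2
  exact ⟨i, hi.symm⟩

end maxPower

variable [InnerProductSpace ℝ E] [InnerProductSpace ℝ F]

theorem sum_sum_mul_norm_sub_sq_eq {κ : Type*} [Fintype κ] {w : κ → ℝ} (hw : ∑ i, w i = 1)
    (u : κ → E) (p : E) :
    ∑ i, ∑ j, w i * w j * ‖u i - u j‖ ^ 2
      = 2 * (∑ i, w i * ‖u i - p‖ ^ 2 - ‖∑ i, w i • (u i - p)‖ ^ 2) := by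
  have hgram : ‖∑ i, w i • (u i - p)‖ ^ 2 = ∑ i, ∑ j, w i * w j * ⟪u i - p, u j - p⟫ := by
    simp only [← real_inner_self_eq_norm_sq, sum_inner, inner_sum, real_inner_smul_left,
      real_inner_smul_right, mul_assoc]
    exact sum_congr rfl fun i _ => sum_congr rfl fun j _ => by rw [real_inner_comm]
  have hsplit : ∀ i j, ‖u i - u j‖ ^ 2
      = ‖u i - p‖ ^ 2 - 2 * ⟪u i - p, u j - p⟫ + ‖u j - p‖ ^ 2 := fun i j => by
    rw [← norm_sub_sq_real, sub_sub_sub_cancel_right]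
  have hcross : ∑ i, ∑ j, w i * w j * ‖u j - p‖ ^ 2 = ∑ j, w j * ‖u j - p‖ ^ 2 := by
    simp only [mul_assoc, ← mul_sum, ← sum_mul, hw, one_mul]
  have hdiag : ∑ i, ∑ j, w i * w j * ‖u i - p‖ ^ 2 = ∑ i, w i * ‖u i - p‖ ^ 2 := by
    simp only [mul_right_comm _ _ (‖_‖ ^ 2), ← mul_sum, hw, mul_one]
  simp only [hgram, hsplit, mul_add, mul_sub, sum_add_distrib, sum_sub_distrib, hcross, hdiag,
    mul_left_comm _ (2 : ℝ), ← mul_sum]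
  ring

theorem sum_mul_norm_sub_sq_le_of_norm_sub_le {κ : Type*} [Fintype κ] {w : κ → ℝ}
    (hw₀ : ∀ i, 0 ≤ w i) (hw₁ : ∑ i, w i = 1) {x : κ → E} {y : κ → F}
    (hxy : ∀ i j, ‖y i - y j‖ ≤ ‖x i - x j‖) {z : F} (hz : ∑ i, w i • y i = z) (p : E) :
    ∑ i, w i * ‖y i - z‖ ^ 2 ≤ ∑ i, w i * ‖x i - p‖ ^ 2 := by
  have hbary : ∑ i, w i • (y i - z) = 0 := by
    simp only [smul_sub, sum_sub_distrib, hz, ← sum_smul, hw₁, one_smul, sub_self]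
  have hpair : ∑ i, ∑ j, w i * w j * ‖y i - y j‖ ^ 2 ≤ ∑ i, ∑ j, w i * w j * ‖x i - x j‖ ^ 2 :=
    sum_le_sum fun i _ => sum_le_sum fun j _ => mul_le_mul_of_nonneg_left
      (pow_le_pow_left₀ (norm_nonneg _) (hxy i j) 2) (mul_nonneg (hw₀ i) (hw₀ j))
  rw [sum_sum_mul_norm_sub_sq_eq hw₁ y z, sum_sum_mul_norm_sub_sq_eq hw₁ x p, hbary,
    norm_zero] at hpair
  nlinarith [sq_nonneg ‖∑ i, w i • (x i - p)‖]

theorem exists_forall_inner_sub_pos_of_notMem {C : Set F} (hne : C.Nonempty)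
    (hcomplete : IsComplete C) (hconv : Convex ℝ C) {z : F} (hz : z ∉ C) :
    ∃ q ∈ C, ∀ c ∈ C, 0 < ⟪c - z, q - z⟫ := by
  obtain ⟨q, hq, hmin⟩ := exists_norm_eq_iInf_of_complete_convex hne hcomplete hconv z
  have hobtuse := (norm_eq_iInf_iff_real_inner_le_zero hconv hq).1 hmin
  have hqz : q - z ≠ 0 := sub_ne_zero.2 fun h => hz (h ▸ hq)
  refine ⟨q, hq, fun c hc => ?_⟩
  have hsplit : ⟪c - z, q - z⟫ = ‖q - z‖ ^ 2 - ⟪z - q, c - q⟫ := by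
    rw [← sub_add_sub_cancel c q z, inner_add_left, real_inner_self_eq_norm_sq, ← neg_sub z q,
      inner_neg_right, real_inner_comm]
    ring
  rw [hsplit]
  linarith [hobtuse c hc, pow_pos (norm_pos_iff.2 hqz) 2]

theorem eventually_norm_add_smul_sub_sq_lt {z s v : F} (h : 0 < ⟪s - z, v⟫) :
    ∀ᶠ t in 𝓝[>] (0 : ℝ), ‖z + t • v - s‖ ^ 2 < ‖z - s‖ ^ 2 := by
  have hexpand : ∀ t : ℝ, ‖z + t • v - s‖ ^ 2
      = ‖z - s‖ ^ 2 - t * (2 * ⟪s - z, v⟫ - t * ‖v‖ ^ 2) := fun t => by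
    rw [add_sub_right_comm, norm_add_sq_real, real_inner_smul_right, norm_smul,
      Real.norm_eq_abs, mul_pow, sq_abs, ← neg_sub s z, inner_neg_left]
    ring
  have hsmall : ∀ᶠ t in 𝓝 (0 : ℝ), t * ‖v‖ ^ 2 < 2 * ⟪s - z, v⟫ :=
    ((continuous_mul_const (‖v‖ ^ 2)).tendsto' 0 0 (zero_mul _)).eventually_lt_const
      (by linarith)
  filter_upwards [nhdsWithin_le_nhds hsmall, self_mem_nhdsWithin] with t ht (ht₀ : 0 < t)
  rw [hexpand]
  nlinarith

section minimizer

variable {ι : Type*} [Fintype ι] [Nonempty ι] {y : ι → F} {r : ι → ℝ}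

variable (y r) in
theorem exists_isMinOn_maxPower :
    ∃ z₀ ∈ convexHull ℝ (range y), IsMinOn (maxPower y r) (convexHull ℝ (range y)) z₀ :=
  ((finite_range y).isCompact_convexHull (𝕜 := ℝ)).exists_isMinOn (range_nonempty y).convexHull
    (continuous_maxPower y r).continuousOn

theorem mem_convexHull_of_isMinOn_maxPower {K : Set F} (hK : Convex ℝ K) (hyK : ∀ i, y i ∈ K)
    {z₀ : F} (hz₀ : z₀ ∈ K) (hmin : IsMinOn (maxPower y r) K z₀) :
    z₀ ∈ convexHull ℝ (y '' maxPowerActive y r z₀) := by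
  by_contra hz
  obtain ⟨q, hq, hpos⟩ := exists_forall_inner_sub_pos_of_notMem
    ((maxPowerActive_nonempty z₀).image y).convexHull
    ((toFinite _).isCompact_convexHull (𝕜 := ℝ)).isComplete (convex_convexHull ℝ _) hz
  have hqK : q ∈ K := convexHull_min (image_subset_iff.2 fun i _ => hyK i) hK hq
  have hdecrease : ∀ᶠ t in 𝓝[>] (0 : ℝ),
      ∀ i, ‖z₀ + t • (q - z₀) - y i‖ ^ 2 - r i ^ 2 < maxPower y r z₀ := by
    refine eventually_all.2 fun i => ?_
    by_cases hi : i ∈ maxPowerActive y r z₀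
    · filter_upwards [eventually_norm_add_smul_sub_sq_lt
        (hpos _ (subset_convexHull ℝ _ (mem_image_of_mem y hi)))] with t ht
      linarith [show ‖z₀ - y i‖ ^ 2 - r i ^ 2 = maxPower y r z₀ from hi]
    · have hlt := (power_le_maxPower z₀ i).lt_of_ne hi
      have hcont : Continuous fun t : ℝ => ‖z₀ + t • (q - z₀) - y i‖ ^ 2 - r i ^ 2 := by
        fun_prop
      exact nhdsWithin_le_nhds ((hcont.tendsto' 0 _ (by simp)).eventually_lt_const hlt)
  have hstay : ∀ᶠ t in 𝓝[>] (0 : ℝ), z₀ + t • (q - z₀) ∈ K := by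
    filter_upwards [Ioo_mem_nhdsGT one_pos] with t ht
    exact hK.add_smul_sub_mem hz₀ hqK ⟨ht.1.le, ht.2.le⟩
  obtain ⟨t, ht, htK⟩ := (hdecrease.and hstay).exists
  exact (hmin htK).not_gt (maxPower_lt_iff.2 ht)

theorem maxPower_nonpos_of_mem_convexHull {x : ι → E} (hxy : ∀ i j, ‖y i - y j‖ ≤ ‖x i - x j‖)
    {p : E} (hp : ∀ i, ‖x i - p‖ ≤ r i) {z₀ : F}
    (hz₀ : z₀ ∈ convexHull ℝ (y '' maxPowerActive y r z₀)) :
    maxPower y r z₀ ≤ 0 := by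
  obtain ⟨κ, _, w, u, hw₀, hw₁, hu, hz⟩ := mem_convexHull_iff_exists_fintype.1 hz₀
  choose idx hactive hidx using hu
  obtain rfl : u = fun j => y (idx j) := funext fun j => (hidx j).symm
  have hspread := sum_mul_norm_sub_sq_le_of_norm_sub_le hw₀ hw₁
    (fun j l => hxy (idx j) (idx l)) hz p
  have hy : ∑ j, w j * ‖y (idx j) - z₀‖ ^ 2 = maxPower y r z₀ + ∑ j, w j * r (idx j) ^ 2 := by
    have hactive' : ∀ j, ‖y (idx j) - z₀‖ ^ 2 = maxPower y r z₀ + r (idx j) ^ 2 := fun j => by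
      rw [norm_sub_rev]
      linarith [show _ = maxPower y r z₀ from hactive j]
    simp only [hactive', mul_add, sum_add_distrib, ← sum_mul, hw₁, one_mul]
  have hx : ∑ j, w j * ‖x (idx j) - p‖ ^ 2 ≤ ∑ j, w j * r (idx j) ^ 2 :=
    sum_le_sum fun j _ => mul_le_mul_of_nonneg_left
      (pow_le_pow_left₀ (norm_nonneg _) (hp (idx j)) 2) (hw₀ j)
  linarith

end minimizer

theorem nonempty_iInter_closedBall_of_norm_sub_le {ι : Type*} [Fintype ι] {x : ι → E}
    {y : ι → F} {r : ι → ℝ} (hxy : ∀ i j, ‖y i - y j‖ ≤ ‖x i - x j‖)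
    (hx : (⋂ i, closedBall (x i) (r i)).Nonempty) :
    (⋂ i, closedBall (y i) (r i)).Nonempty := by
  obtain ⟨p, hp⟩ := hx
  simp only [mem_iInter, mem_closedBall, dist_eq_norm, norm_sub_rev p] at hp
  cases isEmpty_or_nonempty ι
  · simp
  obtain ⟨z₀, hz₀, hmin⟩ := exists_isMinOn_maxPower y r
  have hnonpos := maxPower_nonpos_of_mem_convexHull hxy hp <|
    mem_convexHull_of_isMinOn_maxPower (convex_convexHull ℝ _)
      (fun i => subset_convexHull ℝ _ (mem_range_self i)) hz₀ hmin
  refine ⟨z₀, mem_iInter.2 fun i => ?_⟩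
  rw [mem_closedBall, dist_eq_norm]
  have hri : 0 ≤ r i := (norm_nonneg _).trans (hp i)
  exact (pow_le_pow_iff_left₀ (norm_nonneg _) hri two_ne_zero).1
    (by linarith [power_le_maxPower (y := y) (r := r) z₀ i])

theorem kirszbraun_balls_general (m n k : ℕ)
    (x : Fin k → EuclideanSpace ℝ (Fin m)) (y : Fin k → EuclideanSpace ℝ (Fin n))
    (r : Fin k → ℝ)
    (hxy : ∀ i j, ‖y i - y j‖ ≤ ‖x i - x j‖)
    (hx : (⋂ i, Metric.closedBall (x i) (r i)).Nonempty) :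
    (⋂ i, Metric.closedBall (y i) (r i)).Nonempty :=
  nonempty_iInter_closedBall_of_norm_sub_le hxy hx

/-- Kirszbraun's lemma on intersections of balls: if `‖y i - y j‖ ≤ ‖x i - x j‖` for all
`i, j` and the closed balls `B̄(x i, r i)` have a common point, then so do the closed
balls `B̄(y i, r i)`. -/
theorem kirszbraun_balls (m n k : ℕ)
    (x : Fin k → EuclideanSpace ℝ (Fin m)) (y : Fin k → EuclideanSpace ℝ (Fin n))
    (r : Fin k → ℝ) (hr : ∀ i, 0 < r i)
    (hxy : ∀ i j, ‖y i - y j‖ ≤ ‖x i - x j‖)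
    (hx : (⋂ i, Metric.closedBall (x i) (r i)).Nonempty) :
    (⋂ i, Metric.closedBall (y i) (r i)).Nonempty :=
  kirszbraun_balls_general m n k x y r hxy hx
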